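/- arXiv:2205.12792 — 2 statements merged into one kernel-verified Lean document; each statement's English description precedes it below -/
import Mathlib

section
/- In the setting of the previous lemma, the polynomial Q additionally satisfies: the top (0,1)-homogeneous component Q^{(0,1)}_{n/a} equals (x+1)^{m/a} y^{n/a}, and the top total-degree homogeneous component Q^{(1,1)}_{(m+n)/a} equals x^{m/a}(x+y)^{n/a}, given that F^{(0,1)}_n = (x+1)^m y^n and F^{(1,1)}_{m+n} = x^m (x+y)^n. -/
/-!
Write `m = a k` and `n = a l`. Taking the top `(0,1)`-homogeneous (resp. total-degree) component
of `F = Q ^ a + (F - Q ^ a)` gives `T ^ a = S ^ a + E`, where `S` is the corresponding component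
of `Q`, `T` is the claimed value, and `E` comes from `F - Q ^ a`. Since the support of
`F - Q ^ a` avoids `𝒩''`, the monomials of `E` have `x`-degree `< (a - 1) k` (resp. `y`-degree
`< (a - 1) l`). Setting the other variable to `1` turns `S` and `T` into monic polynomials of the
same degree `K` (the vertex coefficient of `Q` is `1`) with `deg (T ^ a - S ^ a) < (a - 1) K`.
As `T ^ a - S ^ a = (T - S) * ∑ T ^ i S ^ (a - 1 - i)` and the sum is a sum of `a` monic
polynomials of degree `(a - 1) K`, in characteristic zero this forces `S = T`; a homogeneous
polynomial is determined by its dehomogenization.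
-/

open MvPolynomial

noncomputable section

abbrev R2 : Type := MvPolynomial (Fin 2) ℂ

/-- The (0,1)-homogeneous component of `f` of degree `j` (terms with y-exponent `j`). -/
def comp01 (f : R2) (j : ℕ) : R2 :=
  ∑ d ∈ f.support.filter (fun d => d 1 = j), MvPolynomial.monomial d (f.coeff d)

/-- The total-degree (i.e. (1,1)-)homogeneous component of `f` of degree `j`. -/
def comp11 (f : R2) (j : ℕ) : R2 :=
  ∑ d ∈ f.support.filter (fun d => d 0 + d 1 = j), MvPolynomial.monomial d (f.coeff d)

/-- The exponent vector of a monomial, as a point of `ℝ²`. -/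
def toR2pt (d : Fin 2 →₀ ℕ) : ℝ × ℝ := ((d 0 : ℝ), (d 1 : ℝ))

/-- The support of `f`, as a subset of `ℝ²`. -/
def suppSet (f : R2) : Set (ℝ × ℝ) := toR2pt '' (f.support : Set (Fin 2 →₀ ℕ))

/-- The augmented Newton polygon `N⁰(f)`: convex hull of the support together with the origin. -/
def newton0 (f : R2) : Set (ℝ × ℝ) := convexHull ℝ (insert (0, 0) (suppSet f))

/-- The trapezoid `T_{m,n}` with vertices `(0,0), (m+n,0), (m,n), (0,n)`. -/
def Tset (m n : ℝ) : Set (ℝ × ℝ) := {p | 0 ≤ p.2 ∧ p.2 ≤ n ∧ 0 ≤ p.1 ∧ p.1 ≤ m + n - p.2}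

/-- The region `𝒩'' = T_{m/a, n/a} + ((a-1)/a)·(m,n)`. -/
def NsetPP (m n a : ℕ) : Set (ℝ × ℝ) :=
  (fun p : ℝ × ℝ => (p.1 + ((a : ℝ) - 1) * m / a, p.2 + ((a : ℝ) - 1) * n / a)) ''
    Tset ((m : ℝ) / a) ((n : ℝ) / a)

/-- The Jacobian determinant `[f,g] = f_x g_y - f_y g_x`. -/
def jacDet (f g : R2) : R2 :=
  pderiv 0 f * pderiv 1 g - pderiv 1 f * pderiv 0 g

open Polynomial Finset in
theorem Polynomial.IsMonicOfDegree.eq_of_degree_pow_sub_pow_lt {R : Type*} [CommRing R]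
    [IsDomain R] [CharZero R] {p q : R[X]} {k a : ℕ} (hp : IsMonicOfDegree p k)
    (hq : IsMonicOfDegree q k) (ha : 0 < a) (h : (p ^ a - q ^ a).degree < ((a - 1) * k : ℕ)) :
    p = q := by
  set g := ∑ i ∈ range a, p ^ i * q ^ (a - 1 - i)
  have hterm : ∀ i ∈ range a, IsMonicOfDegree (p ^ i * q ^ (a - 1 - i)) ((a - 1) * k) := by
    intro i hi
    have hia : i ≤ a - 1 := by rw [mem_range] at hi; omega
    have := (hp.pow i).mul (hq.pow (a - 1 - i))
    rwa [← mul_add, Nat.add_sub_cancel' hia, mul_comm k] at this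
  have hg : g.degree = ((a - 1) * k : ℕ) := by
    refine degree_eq_of_le_of_coeff_ne_zero ?_ ?_
    · exact degree_le_of_natDegree_le
        (natDegree_sum_le_of_forall_le _ _ fun i hi => (hterm i hi).natDegree_eq.le)
    · rw [finsetSum_coeff, sum_congr rfl fun i hi => (hterm i hi).natDegree_eq ▸
        (hterm i hi).monic.coeff_natDegree]
      simpa using ha.ne'
  by_contra hne
  have hr : 0 ≤ (p - q).degree := zero_le_degree_iff.2 (sub_ne_zero.2 hne)
  rw [← geom_sum₂_mul, degree_mul, hg] at h
  exact h.not_ge (le_add_of_nonneg_right hr)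

namespace MvPolynomial

open Finset Finsupp

variable {σ R : Type*}

section WeightedComponent

variable [CommSemiring R]

theorem weightedTotalDegree_mul_le (w : σ → ℕ) (p q : MvPolynomial σ R) :
    weightedTotalDegree w (p * q) ≤ weightedTotalDegree w p + weightedTotalDegree w q := by
  classical
  refine Finset.sup_le fun d hd => ?_
  obtain ⟨u, hu, v, hv, rfl⟩ := Finset.mem_add.1 (support_mul p q hd)
  rw [map_add]
  exact add_le_add (le_weightedTotalDegree w hu) (le_weightedTotalDegree w hv)

theorem weightedTotalDegree_pow_le (w : σ → ℕ) (p : MvPolynomial σ R) (n : ℕ) :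
    weightedTotalDegree w (p ^ n) ≤ n * weightedTotalDegree w p := by
  induction n with
  | zero =>
    classical
    refine Finset.sup_le fun d hd => ?_
    obtain rfl : d = 0 := by
      by_contra h
      exact mem_support_iff.1 hd (by rw [pow_zero, coeff_one, if_neg (Ne.symm h)])
    simp
  | succ n ih =>
    rw [pow_succ, Nat.succ_mul]
    exact (weightedTotalDegree_mul_le w _ _).trans (Nat.add_le_add_right ih _)

theorem weightedHomogeneousComponent_mul_of_le {w : σ → ℕ} {p q : MvPolynomial σ R}
    {D E : ℕ} (hp : weightedTotalDegree w p ≤ D) (hq : weightedTotalDegree w q ≤ E) :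
    weightedHomogeneousComponent w (D + E) (p * q) =
      weightedHomogeneousComponent w D p * weightedHomogeneousComponent w E q := by
  classical
  ext d
  simp only [coeff_weightedHomogeneousComponent, coeff_mul]
  split_ifs with hd
  · refine Finset.sum_congr rfl fun x hx => ?_
    rw [HasAntidiagonal.mem_antidiagonal] at hx
    by_cases hpx : coeff x.1 p = 0
    · simp [hpx]
    by_cases hqx : coeff x.2 q = 0
    · simp [hqx]
    have h1 := (le_weightedTotalDegree w (mem_support_iff.2 hpx)).trans hp
    have h2 := (le_weightedTotalDegree w (mem_support_iff.2 hqx)).trans hq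
    have h3 : weight w x.1 + weight w x.2 = D + E := by rw [← map_add, hx, hd]
    rw [if_pos (by omega), if_pos (by omega)]
  · refine (Finset.sum_eq_zero fun x hx => ?_).symm
    rw [HasAntidiagonal.mem_antidiagonal] at hx
    split_ifs with h1 h2
    · exact absurd (by rw [← hx, map_add, h1, h2]) hd
    all_goals simp

theorem weightedHomogeneousComponent_pow_of_le {w : σ → ℕ} {p : MvPolynomial σ R} {D : ℕ}
    (hp : weightedTotalDegree w p ≤ D) (n : ℕ) :
    weightedHomogeneousComponent w (n * D) (p ^ n) = weightedHomogeneousComponent w D p ^ n := by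
  induction n with
  | zero => simpa using (isWeightedHomogeneous_one R w).weightedHomogeneousComponent_same
  | succ n ih =>
    have hpn := (weightedTotalDegree_pow_le w p n).trans (Nat.mul_le_mul_left n hp)
    rw [pow_succ, Nat.succ_mul, weightedHomogeneousComponent_mul_of_le hpn hp, ih, pow_succ]

end WeightedComponent

section Dehomogenize

variable [CommSemiring R] [DecidableEq σ]

-- For two variables this is the usual dehomogenization: the other variable is set to `1`.
noncomputable def dehomogenize (i : σ) : MvPolynomial σ R →ₐ[R] Polynomial R :=
  aeval (Function.update 1 i Polynomial.X)

@[simp]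
theorem dehomogenize_X_self (i : σ) : dehomogenize i (X i : MvPolynomial σ R) = Polynomial.X := by
  simp [dehomogenize]

@[simp]
theorem dehomogenize_X_of_ne {i j : σ} (h : j ≠ i) :
    dehomogenize i (X j : MvPolynomial σ R) = 1 := by
  simp [dehomogenize, Function.update_of_ne h]

theorem coeff_dehomogenize (p : MvPolynomial σ R) (i : σ) (j : ℕ) :
    (dehomogenize i p).coeff j = ∑ d ∈ p.support with d i = j, p.coeff d := by
  conv_lhs => rw [p.as_sum]
  rw [dehomogenize, map_sum, Polynomial.finsetSum_coeff, Finset.sum_filter]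
  refine Finset.sum_congr rfl fun d _ => ?_
  have hprod : d.prod (fun k e => Function.update (1 : σ → Polynomial R) i Polynomial.X k ^ e) =
      Polynomial.X ^ d i := by
    rw [Finsupp.prod, Finset.prod_eq_single i (fun k _ hk => by simp [Function.update_of_ne hk])
      (fun hi => by simp [Finsupp.notMem_support_iff.1 hi]), Function.update_self]
  rw [aeval_monomial, hprod, Polynomial.algebraMap_eq, Polynomial.coeff_C_mul_X_pow]
  simp only [eq_comm]

variable {w : σ → ℕ} {i : σ} {D : ℕ}

theorem degree_dehomogenize_lt {p : MvPolynomial σ R} {N : ℕ}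
    (h : ∀ d ∈ p.support, d i < N) : (dehomogenize i p).degree < N := by
  refine Polynomial.degree_lt_iff_coeff_zero _ _ |>.2 fun j hj => ?_
  rw [coeff_dehomogenize]
  refine Finset.sum_eq_zero fun d hd => ?_
  rw [Finset.mem_filter] at hd
  exact absurd (h d hd.1) (by omega)

theorem coeff_dehomogenize_of_isWeightedHomogeneous {p : MvPolynomial σ R}
    (hp : IsWeightedHomogeneous w p D)
    (hinj : Set.InjOn (fun d : σ →₀ ℕ => d i) {d | weight w d = D})
    {d : σ →₀ ℕ} (hd : weight w d = D) :
    (dehomogenize i p).coeff (d i) = p.coeff d := by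
  rw [coeff_dehomogenize, Finset.sum_filter, Finset.sum_eq_single d, if_pos rfl]
  · exact fun e he hne => if_neg fun h => hne (hinj (hp (mem_support_iff.1 he)) hd h)
  · intro hd'
    rw [notMem_support_iff.1 hd', ite_self]

theorem eq_of_dehomogenize_eq {p q : MvPolynomial σ R}
    (hp : IsWeightedHomogeneous w p D) (hq : IsWeightedHomogeneous w q D)
    (hinj : Set.InjOn (fun d : σ →₀ ℕ => d i) {d | weight w d = D})
    (h : dehomogenize i p = dehomogenize i q) : p = q := by
  ext d
  by_cases hd : weight w d = D
  · rw [← coeff_dehomogenize_of_isWeightedHomogeneous hp hinj hd, h,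
      coeff_dehomogenize_of_isWeightedHomogeneous hq hinj hd]
  · rw [hp.coeff_eq_zero d hd, hq.coeff_eq_zero d hd]

theorem isMonicOfDegree_dehomogenize [Nontrivial R] {p : MvPolynomial σ R}
    (hp : IsWeightedHomogeneous w p D)
    (hinj : Set.InjOn (fun d : σ →₀ ℕ => d i) {d | weight w d = D})
    {v : σ →₀ ℕ} (hv : weight w v = D) (hpv : p.coeff v = 1)
    (hle : ∀ d ∈ p.support, d i ≤ v i) :
    (dehomogenize i p).IsMonicOfDegree (v i) :=
  (Polynomial.isMonicOfDegree_iff _ _).2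
    ⟨Polynomial.natDegree_le_of_degree_le <| Order.le_of_lt_succ <|
      degree_dehomogenize_lt fun d hd => Nat.lt_succ_of_le (hle d hd),
    by rw [coeff_dehomogenize_of_isWeightedHomogeneous hp hinj hv, hpv]⟩

end Dehomogenize

section ApproximateRoot

variable [CommRing R] [IsDomain R] [CharZero R] [DecidableEq σ]

theorem weightedHomogeneousComponent_eq_of_approxRoot (w : σ → ℕ) (i : σ) {a D : ℕ}
    (ha : 0 < a)
    (hinj : Set.InjOn (fun d : σ →₀ ℕ => d i) {d | weight w d = D})
    {v : σ →₀ ℕ} (hv : weight w v = D) {F Q T : MvPolynomial σ R}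
    (hQ : weightedTotalDegree w Q ≤ D) (hQi : ∀ d ∈ Q.support, weight w d = D → d i ≤ v i)
    (hQv : Q.coeff v = 1) (hT : IsWeightedHomogeneous w T D)
    (hTmonic : (dehomogenize i T).IsMonicOfDegree (v i))
    (hF : weightedHomogeneousComponent w (a * D) F = T ^ a)
    (hE : ∀ d ∈ (F - Q ^ a).support, weight w d = a * D → d i < (a - 1) * v i) :
    weightedHomogeneousComponent w D Q = T := by
  classical
  set S := weightedHomogeneousComponent w D Q
  have hS : IsWeightedHomogeneous w S D := weightedHomogeneousComponent_isWeightedHomogeneous D Q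
  have hSi : ∀ d ∈ S.support, d i ≤ v i := fun d hd => by
    rw [support_weightedHomogeneousComponent, Finset.mem_filter] at hd
    exact hQi d hd.1 hd.2
  have hSmonic := isMonicOfDegree_dehomogenize hS hinj hv
    (by rwa [coeff_weightedHomogeneousComponent, if_pos hv]) hSi
  have hdiff : T ^ a - S ^ a = weightedHomogeneousComponent w (a * D) (F - Q ^ a) := by
    rw [map_sub, hF, weightedHomogeneousComponent_pow_of_le hQ]
  have hdeg : (dehomogenize i T ^ a - dehomogenize i S ^ a).degree < ((a - 1) * v i : ℕ) := by
    rw [← map_pow, ← map_pow, ← map_sub, hdiff]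
    refine degree_dehomogenize_lt fun d hd => ?_
    rw [support_weightedHomogeneousComponent, Finset.mem_filter] at hd
    exact hE d hd.1 hd.2
  exact (eq_of_dehomogenize_eq hS hT hinj
    (hTmonic.eq_of_degree_pow_sub_pow_lt hSmonic ha hdeg).symm)

end ApproximateRoot

end MvPolynomial

open Finsupp in
theorem comp01_eq_weightedHomogeneousComponent (f : R2) (j : ℕ) :
    comp01 f j = weightedHomogeneousComponent (Pi.single 1 1) j f := by
  simp only [comp01, weightedHomogeneousComponent_apply, weight_single_one_apply]

theorem comp11_eq_homogeneousComponent (f : R2) (j : ℕ) :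
    comp11 f j = homogeneousComponent j f := by
  simp only [comp11, homogeneousComponent_apply, Finsupp.degree_eq_sum, Fin.sum_univ_two]

theorem toR2pt_mem_newton0 {f : R2} {d : Fin 2 →₀ ℕ} (hd : d ∈ f.support) :
    toR2pt d ∈ newton0 f :=
  subset_convexHull ℝ _ (Set.mem_insert_of_mem _ ⟨d, hd, rfl⟩)

theorem coeff_eq_one_of_newton0_sub_monomial_ssubset {f : R2} {v : Fin 2 →₀ ℕ}
    (h : newton0 (f - monomial v 1) ⊂ newton0 f) : f.coeff v = 1 := by
  by_contra hne
  refine h.2 (convexHull_mono (Set.insert_subset_insert (Set.image_mono fun d hd => ?_)))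
  rw [Finset.mem_coe, mem_support_iff] at hd ⊢
  rw [coeff_sub, coeff_monomial]
  split_ifs with hdv
  · exact hdv ▸ sub_ne_zero.2 hne
  · rwa [sub_zero]

theorem toR2pt_mem_Tset_natCast_iff (d : Fin 2 →₀ ℕ) (k l : ℕ) :
    toR2pt d ∈ Tset k l ↔ d 1 ≤ l ∧ d 0 + d 1 ≤ k + l := by
  simp only [Tset, toR2pt, Set.mem_ofPred_eq, le_sub_iff_add_le]
  norm_cast
  simp only [zero_le, true_and]

theorem mem_NsetPP_of_le {m n a : ℕ} (ha : 0 < a) {p : ℝ × ℝ} (h1 : (a - 1) * m / a ≤ p.1)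
    (h2 : (a - 1) * n / a ≤ p.2) (h3 : p.2 ≤ n) (h4 : p.1 + p.2 ≤ m + n) :
    p ∈ NsetPP m n a := by
  have hm : (m : ℝ) / a + (a - 1) * m / a = m := by field_simp; ring
  have hn : (n : ℝ) / a + (a - 1) * n / a = n := by field_simp; ring
  refine ⟨(p.1 - (a - 1) * m / a, p.2 - (a - 1) * n / a), ⟨?_, ?_, ?_, ?_⟩, by simp⟩ <;>
    dsimp only <;> linarith

theorem lt_of_mem_Tset_diff_NsetPP_of_snd_eq {m n a : ℕ} (ha : 0 < a) {p : ℝ × ℝ}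
    (hp : p ∈ Tset m n \ NsetPP m n a) (h : p.2 = n) : p.1 < (a - 1) * m / a := by
  obtain ⟨⟨-, -, -, hp4⟩, hpN⟩ := hp
  have hn : (a - 1) * n / a ≤ (n : ℝ) := by
    rw [div_le_iff₀ (by positivity)]; nlinarith
  by_contra! h1
  exact hpN (mem_NsetPP_of_le ha h1 (h ▸ hn) h.le (by linarith))

theorem lt_of_mem_Tset_diff_NsetPP_of_add_eq {m n a : ℕ} (ha : 0 < a) {p : ℝ × ℝ}
    (hp : p ∈ Tset m n \ NsetPP m n a) (h : p.1 + p.2 = m + n) : p.2 < (a - 1) * n / a := by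
  obtain ⟨⟨-, hp2, -, -⟩, hpN⟩ := hp
  have hm : (a - 1) * m / a ≤ (m : ℝ) := by
    rw [div_le_iff₀ (by positivity)]; nlinarith
  by_contra! h2
  exact hpN (mem_NsetPP_of_le ha (by linarith) h2 hp2 h.le)

open Finsupp in
theorem comp01_eq_of_approxRoot {a k l : ℕ} (ha : 0 < a) {F Q : R2}
    (hQ : ∀ d ∈ Q.support, d 1 ≤ l ∧ d 0 + d 1 ≤ k + l)
    (hQv : Q.coeff (single 0 k + single 1 l) = 1)
    (hF : comp01 F (a * l) = ((X 0 + 1) ^ k * X 1 ^ l) ^ a)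
    (hE : ∀ d ∈ (F - Q ^ a).support, d 1 = a * l → d 0 < (a - 1) * k) :
    comp01 Q l = (X 0 + 1) ^ k * X 1 ^ l := by
  rw [comp01_eq_weightedHomogeneousComponent] at hF ⊢
  have hw : ∀ d : Fin 2 →₀ ℕ, weight (Pi.single 1 1) d = d 1 := weight_single_one_apply 1
  have hT : IsWeightedHomogeneous (Pi.single 1 1) ((X 0 + 1) ^ k * X 1 ^ l : R2) l := by
    have hX0 : IsWeightedHomogeneous (Pi.single 1 1) (X 0 : R2) 0 := by
      simpa using isWeightedHomogeneous_X ℂ (Pi.single 1 1 : Fin 2 → ℕ) 0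
    simpa using ((hX0.add (isWeightedHomogeneous_one ℂ _)).pow k).mul
      ((isWeightedHomogeneous_X ℂ (Pi.single 1 1 : Fin 2 → ℕ) 1).pow l)
  have hφT : dehomogenize 0 ((X 0 + 1) ^ k * X 1 ^ l : R2) = (Polynomial.X + 1) ^ k := by
    simp
  refine weightedHomogeneousComponent_eq_of_approxRoot _ 0 ha ?_ (by simp [hw])
    (Finset.sup_le fun d hd => (hw d).symm ▸ (hQ d hd).1) (fun d hd h => ?_) hQv hT
    (by simpa [hφT] using (Polynomial.isMonicOfDegree_X_add_one (1 : ℂ)).pow k) hF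
    (fun d hd h => ?_)
  · intro d hd e he h
    simp only [Set.mem_ofPred_eq, hw] at hd he h
    exact Finsupp.ext (Fin.forall_fin_two.2 ⟨h, hd.trans he.symm⟩)
  · rw [hw] at h
    simpa [h] using (hQ d hd).2
  · simpa using hE d hd (by rwa [hw] at h)

open Finsupp in
theorem comp11_eq_of_approxRoot {a k l : ℕ} (ha : 0 < a) {F Q : R2}
    (hQ : ∀ d ∈ Q.support, d 1 ≤ l ∧ d 0 + d 1 ≤ k + l)
    (hQv : Q.coeff (single 0 k + single 1 l) = 1)
    (hF : comp11 F (a * (k + l)) = (X 0 ^ k * (X 0 + X 1) ^ l) ^ a)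
    (hE : ∀ d ∈ (F - Q ^ a).support, d 0 + d 1 = a * (k + l) → d 1 < (a - 1) * l) :
    comp11 Q (k + l) = X 0 ^ k * (X 0 + X 1) ^ l := by
  rw [comp11_eq_homogeneousComponent] at hF ⊢
  have hw : ∀ d : Fin 2 →₀ ℕ, weight 1 d = d 0 + d 1 := by
    simp [weight_eq_sum, Fin.sum_univ_two]
  have hT : IsHomogeneous (X 0 ^ k * (X 0 + X 1) ^ l : R2) (k + l) := by
    simpa using ((isHomogeneous_X ℂ 0).pow k).mul
      (((isHomogeneous_X ℂ 0).add (isHomogeneous_X ℂ 1)).pow l)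
  have hφT : dehomogenize 1 (X 0 ^ k * (X 0 + X 1) ^ l : R2) = (Polynomial.X + 1) ^ l := by
    simp [add_comm]
  refine weightedHomogeneousComponent_eq_of_approxRoot _ 1 ha ?_ (by simp [hw])
    (Finset.sup_le fun d hd => (hw d).symm ▸ (hQ d hd).2) (fun d hd h => ?_) hQv hT
    (by simpa [hφT] using (Polynomial.isMonicOfDegree_X_add_one (1 : ℂ)).pow l) hF
    (fun d hd h => ?_)
  · intro d hd e he h
    simp only [Set.mem_ofPred_eq, hw] at hd he h
    exact Finsupp.ext (Fin.forall_fin_two.2 ⟨by omega, h⟩)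
  · simpa using (hQ d hd).1
  · simpa using hE d hd (by rwa [hw] at h)

theorem lt_of_toR2pt_mem_Tset_diff_NsetPP {a k l : ℕ} (ha : 0 < a) {d : Fin 2 →₀ ℕ}
    (hd : toR2pt d ∈ Tset ↑(a * k) ↑(a * l) \ NsetPP (a * k) (a * l) a) :
    (d 1 = a * l → d 0 < (a - 1) * k) ∧ (d 0 + d 1 = a * (k + l) → d 1 < (a - 1) * l) := by
  have hcast (j : ℕ) : ((a : ℝ) - 1) * ((a * j : ℕ) : ℝ) / a = ((a - 1) * j : ℕ) := by
    push_cast [Nat.cast_sub ha]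
    field_simp
  refine ⟨fun h => ?_, fun h => ?_⟩
  · have h' : (d 0 : ℝ) < ((a - 1) * k : ℕ) :=
      hcast k ▸ lt_of_mem_Tset_diff_NsetPP_of_snd_eq ha hd (by simp [toR2pt, h])
    exact_mod_cast h'
  · have h' : (d 1 : ℝ) < ((a - 1) * l : ℕ) :=
      hcast l ▸ lt_of_mem_Tset_diff_NsetPP_of_add_eq ha hd
        (by simp only [toR2pt]; exact_mod_cast h.trans (Nat.mul_add a k l))
    exact_mod_cast h'

theorem stmt13_general (a m n : ℕ) (ha : 2 ≤ a)
    (ham : a ∣ m) (han : a ∣ n) (F Q : R2)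
    (hF01 : comp01 F n = (X 0 + 1) ^ m * X 1 ^ n)
    (hF11 : comp11 F (m + n) = X 0 ^ m * (X 0 + X 1) ^ n)
    (hNQ : newton0 Q = Tset ((m : ℝ) / a) ((n : ℝ) / a))
    (hQvtx : newton0 (Q - X 0 ^ (m / a) * X 1 ^ (n / a)) ⊂ newton0 Q)
    (hR : suppSet (F - Q ^ a) ⊆ Tset (m : ℝ) (n : ℝ) \ NsetPP m n a) :
    comp01 Q (n / a) = (X 0 + 1) ^ (m / a) * X 1 ^ (n / a) ∧
      comp11 Q ((m + n) / a) = X 0 ^ (m / a) * (X 0 + X 1) ^ (n / a) := by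
  obtain ⟨k, rfl⟩ := ham
  obtain ⟨l, rfl⟩ := han
  have ha0 : 0 < a := by omega
  have hdiv (j : ℕ) : ((a * j : ℕ) : ℝ) / a = j := by
    push_cast
    field_simp
  rw [← Nat.mul_add] at hF11 ⊢
  simp only [Nat.mul_div_cancel_left _ ha0] at hQvtx ⊢
  rw [hdiv, hdiv] at hNQ
  rw [X_pow_eq_monomial, X_pow_eq_monomial, monomial_mul, one_mul] at hQvtx
  have hQv := coeff_eq_one_of_newton0_sub_monomial_ssubset hQvtx
  have hQ : ∀ d ∈ Q.support, d 1 ≤ l ∧ d 0 + d 1 ≤ k + l := fun d hd =>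
    (toR2pt_mem_Tset_natCast_iff d k l).1 (hNQ ▸ toR2pt_mem_newton0 hd)
  have hE : ∀ d ∈ (F - Q ^ a).support, _ := fun d hd =>
    lt_of_toR2pt_mem_Tset_diff_NsetPP ha0 (hR ⟨d, hd, rfl⟩)
  exact ⟨comp01_eq_of_approxRoot ha0 hQ hQv (by rw [hF01]; ring) fun d hd => (hE d hd).1,
    comp11_eq_of_approxRoot ha0 hQ hQv (by rw [hF11]; ring) fun d hd => (hE d hd).2⟩

/-- the approximate root `Q` has top homogeneous components
`Q^{(0,1)}_{n/a} = (x+1)^{m/a} y^{n/a}` and `Q^{(1,1)}_{(m+n)/a} = x^{m/a}(x+y)^{n/a}`. -/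
theorem stmt13 (a m n : ℕ) (ha : 2 ≤ a) (hm : 0 < m)
    (ham : a ∣ m) (han : a ∣ n) (hmn : m < n) (F Q : R2)
    (hNF : newton0 F = Tset (m : ℝ) (n : ℝ))
    (hF01 : comp01 F n = (X 0 + 1) ^ m * X 1 ^ n)
    (hF11 : comp11 F (m + n) = X 0 ^ m * (X 0 + X 1) ^ n)
    (hNQ : newton0 Q = Tset ((m : ℝ) / a) ((n : ℝ) / a))
    (hQvtx : newton0 (Q - X 0 ^ (m / a) * X 1 ^ (n / a)) ⊂ newton0 Q)
    (hR : suppSet (F - Q ^ a) ⊆ Tset (m : ℝ) (n : ℝ) \ NsetPP m n a) :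
    comp01 Q (n / a) = (X 0 + 1) ^ (m / a) * X 1 ^ (n / a) ∧
      comp11 Q ((m + n) / a) = X 0 ^ (m / a) * (X 0 + X 1) ^ (n / a) :=
  stmt13_general a m n ha ham han F Q hF01 hF11 hNQ hQvtx hR
end
end

section
/- Let a, δ, m, n be positive integers with m < n, a ≥ 2, and aδ dividing both m and n. Let E ∈ ℂ[x,y] satisfy N⁰(E) = T_{m/(aδ), n/(aδ)} with the coefficient of x^{m/(aδ)} y^{n/(aδ)} equal to 1, and let α ∈ ℂ[z] be a monic polynomial of degree k ≥ 1. Suppose supp(F − α(E)) ⊆ N⁰(F) \ 𝒩'' where N⁰(F) = T_{m,n} and 𝒩'' = T_{m/a,n/a} + ((a−1)/a)(m,n) (a nonempty region inside T_{m,n}). Then k = aδ. -/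
/-! Order the monomials `x^i y^j` colexicographically, i.e. by `j` first and then by `i`.
Since `N⁰(E) = T_{m/(aδ), n/(aδ)}` and the corner coefficient of `E` is `1`, `E` is monic of
degree `D = (m/(aδ), n/(aδ))` for this order, hence `α(E)` is monic of degree `k • D`. Every
monomial of `α(E) = F - (F - α(E))` lies in `T_{m,n}`, so `k n/(aδ) ≤ n`, that is `k ≤ aδ`.
If `k < aδ`, all monomials of `α(E)` have `y`-degree `< n`, so the corner `(m, n)`, a vertex of
`N⁰(F)` and hence a monomial of `F`, survives in `F - α(E)`; but `(m, n) ∈ 𝒩''`. -/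

open MvPolynomial

noncomputable section

open scoped MonomialOrder

namespace MonomialOrder

section Colex

variable {σ : Type*} [LinearOrder σ] [WellFoundedLT σ]

def colex : MonomialOrder σ where
  syn := Colex (σ →₀ ℕ)
  toSyn := { toEquiv := toColex, map_add' := fun _ _ => rfl }
  toSyn_monotone := Finsupp.toColex_monotone

theorem colex_lt_iff {c d : σ →₀ ℕ} : c ≺[colex] d ↔ toColex c < toColex d := Iff.rfl

end Colex

theorem colex_lt_of_snd_lt {c d : Fin 2 →₀ ℕ} (h : c 1 < d 1) : c ≺[colex] d :=
  colex_lt_iff.mpr ⟨1, fun j hj => absurd hj (by fin_cases j <;> decide), h⟩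

theorem colex_le_of_snd_eq_of_fst_le {c d : Fin 2 →₀ ℕ} (h1 : c 1 = d 1) (h0 : c 0 ≤ d 0) :
    c ≼[colex] d := by
  rcases h0.lt_or_eq with h0 | h0
  · exact (colex_lt_iff.mpr ⟨0, fun j hj => by fin_cases j; exacts [absurd hj (by decide), h1],
      h0⟩).le
  · rw [show c = d from Finsupp.ext fun i => by fin_cases i <;> assumption]

variable {σ R : Type*} [CommSemiring R] {m : MonomialOrder σ}

theorem coeff_eq_zero_of_colex_degree_snd_lt {f : MvPolynomial (Fin 2) R} {c : Fin 2 →₀ ℕ}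
    (h : colex.degree f 1 < c 1) : f.coeff c = 0 :=
  colex.coeff_eq_zero_of_lt (colex_lt_of_snd_lt h)

theorem degree_eq_of_forall_le {f : MvPolynomial σ R} {d : σ →₀ ℕ} (hd : f.coeff d ≠ 0)
    (h : ∀ c ∈ f.support, c ≼[m] d) : m.degree f = d :=
  m.toSyn.injective <| le_antisymm (m.degree_le_iff.mpr h) (m.le_degree (mem_support_iff.mpr hd))

theorem Monic.aeval {f : MvPolynomial σ R} (hf : m.Monic f) (hf0 : m.degree f ≠ 0)
    {p : Polynomial R} (hp : p.Monic) :
    m.Monic (Polynomial.aeval f p) ∧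
      m.degree (Polynomial.aeval f p) = p.natDegree • m.degree f := by
  rcases subsingleton_or_nontrivial R with _ | _
  · exact absurd m.degree_subsingleton hf0
  set k := p.natDegree
  rcases Nat.eq_zero_or_pos k with hk | hk
  · rw [hp.natDegree_eq_zero.mp hk]
    simp [monic_one, degree_one, hk]
  set g := ∑ i ∈ Finset.range k, p.coeff i • f ^ i
  have hsplit : Polynomial.aeval f p = f ^ k + g := by
    rw [Polynomial.aeval_eq_sum_range, Finset.sum_range_succ, hp.coeff_natDegree, one_smul,
      add_comm]
  have hfk : m.degree (f ^ k) = k • m.degree f :=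
    m.degree_pow_of_pow_leadingCoeff_ne_zero (by simp [hf.leadingCoeff_eq_one])
  have hg : m.degree g ≺[m] m.degree (f ^ k) := by
    have hD : 0 < m.toSyn (m.degree f) := m.toSyn_lt_iff_ne_zero.mpr (by simpa using hf0)
    rw [hfk, map_nsmul]
    refine m.degree_sum_le.trans_lt
      ((Finset.sup_lt_iff (bot_lt_iff_ne_bot.mpr ?_)).mpr fun i hi => ?_)
    · simpa using (nsmul_pos hD hk.ne').ne'
    calc m.toSyn (m.degree (p.coeff i • f ^ i)) ≤ m.toSyn (m.degree (f ^ i)) := m.degree_smul_le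
      _ ≤ i • m.toSyn (m.degree f) := by simpa using m.degree_pow_le i
      _ < k • m.toSyn (m.degree f) := nsmul_lt_nsmul_left hD (Finset.mem_range.mp hi)
  rw [hsplit]
  exact ⟨hf.pow.add_of_lt hg, by rw [m.degree_add_of_lt hg, hfk]⟩

end MonomialOrder

open MonomialOrder

theorem toR2pt_injective : Function.Injective toR2pt := fun d e h => by
  simp only [toR2pt, Prod.mk.injEq, Nat.cast_inj] at h
  exact Finsupp.ext fun i => by fin_cases i; exacts [h.1, h.2]

theorem toR2pt_mem_suppSet {f : R2} {d : Fin 2 →₀ ℕ} :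
    toR2pt d ∈ suppSet f ↔ f.coeff d ≠ 0 :=
  toR2pt_injective.mem_set_image.trans mem_support_iff

theorem suppSet_subset_newton0 (f : R2) : suppSet f ⊆ newton0 f :=
  (Set.subset_insert _ _).trans (subset_convexHull ℝ _)

theorem suppSet_subset_union_sub (f g : R2) : suppSet g ⊆ suppSet f ∪ suppSet (f - g) := by
  classical
  rw [suppSet, suppSet, suppSet, ← Set.image_union, ← Finset.coe_union]
  refine Set.image_mono ?_
  simpa using Finset.coe_subset.mpr (support_sub (Fin 2) f (f - g))

theorem corner_mem_Tset {m n : ℝ} (hm : 0 ≤ m) (hn : 0 ≤ n) : (m, n) ∈ Tset m n :=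
  ⟨hn, le_rfl, hm, by simp⟩

theorem corner_mem_exposedPoints_Tset {m n : ℝ} (hm : 0 ≤ m) (hn : 0 ≤ n) :
    (m, n) ∈ (Tset m n).exposedPoints ℝ := by
  -- `x + 2y ≤ (m + n - y) + 2y ≤ m + 2n` on `T_{m,n}`, with equality only at `(m, n)`
  refine ⟨corner_mem_Tset hm hn,
    ContinuousLinearMap.fst ℝ ℝ ℝ + (2 : ℝ) • ContinuousLinearMap.snd ℝ ℝ ℝ, ?_⟩
  rintro ⟨x, y⟩ ⟨-, hy, -, hx⟩
  simp only [add_apply, smul_apply, ContinuousLinearMap.coe_fst', ContinuousLinearMap.coe_snd',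
    smul_eq_mul, Prod.mk.injEq]
  exact ⟨by linarith, fun h => ⟨by linarith, by linarith⟩⟩

theorem coeff_corner_ne_zero {F : R2} {m n : ℕ} (hF : newton0 F = Tset m n) (hn : 0 < n) :
    F.coeff (Finsupp.single 0 m + Finsupp.single 1 n) ≠ 0 := by
  have hext := exposedPoints_subset_extremePoints
    (hF ▸ corner_mem_exposedPoints_Tset m.cast_nonneg n.cast_nonneg)
  have hmem := (extremePoints_convexHull_subset hext).resolve_left fun h => by
    simp only [Prod.mk.injEq, Nat.cast_eq_zero] at h; omega
  rw [← toR2pt_mem_suppSet]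
  simpa [toR2pt] using hmem

theorem corner_mem_NsetPP {m n a : ℕ} (ha : a ≠ 0) :
    ((m : ℝ), (n : ℝ)) ∈ NsetPP m n a := by
  refine ⟨((m : ℝ) / a, (n : ℝ) / a), corner_mem_Tset (by positivity) (by positivity), ?_⟩
  have : (a : ℝ) ≠ 0 := by exact_mod_cast ha
  ext <;> field_simp <;> ring

theorem colex_degree_eq_of_newton0_eq_Tset {E : R2} {p q : ℕ} (hE : newton0 E = Tset p q)
    (hcoef : E.coeff (Finsupp.single 0 p + Finsupp.single 1 q) ≠ 0) :
    colex.degree E = Finsupp.single 0 p + Finsupp.single 1 q := by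
  refine degree_eq_of_forall_le hcoef fun c hc => ?_
  obtain ⟨-, hq, -, hp⟩ : toR2pt c ∈ Tset p q :=
    hE ▸ suppSet_subset_newton0 E ⟨c, hc, rfl⟩
  simp only [toR2pt] at hq hp
  rcases (show c 1 ≤ q by exact_mod_cast hq).lt_or_eq with h | h
  · exact (colex_lt_of_snd_lt (by simpa using h)).le
  · rw [h] at hp
    have h0 : c 0 ≤ p := by exact_mod_cast (by linarith : (c 0 : ℝ) ≤ p)
    exact colex_le_of_snd_eq_of_fst_le (by simpa using h) (by simpa using h0)

theorem stmt17_general (a δ m n k : ℕ) (hmn : m < n)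
    (hdm : a * δ ∣ m) (hdn : a * δ ∣ n) (E F : R2)
    (hNE : newton0 E = Tset ((m : ℝ) / (a * δ)) ((n : ℝ) / (a * δ)))
    (hcoef : MvPolynomial.coeff
      (Finsupp.single 0 (m / (a * δ)) + Finsupp.single 1 (n / (a * δ))) E = 1)
    (α : Polynomial ℂ) (hmon : α.Monic) (hdeg : α.natDegree = k)
    (hNF : newton0 F = Tset (m : ℝ) (n : ℝ))
    (hsupp : suppSet (F - Polynomial.aeval E α) ⊆
      Tset (m : ℝ) (n : ℝ) \ NsetPP m n a) :
    k = a * δ := by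
  set M := a * δ
  have hM : 0 < M := Nat.pos_of_dvd_of_pos hdn (by omega)
  have hn' : 0 < n / M := Nat.div_pos (Nat.le_of_dvd (by omega) hdn) hM
  have hcast {j : ℕ} (h : M ∣ j) : ((j / M : ℕ) : ℝ) = j / (a * δ) := by
    rw [Nat.cast_div h (by positivity), Nat.cast_mul]
  have hEdeg := colex_degree_eq_of_newton0_eq_Tset (by rwa [hcast hdm, hcast hdn])
    (hcoef.trans_ne one_ne_zero)
  obtain ⟨hαmon, hαdeg⟩ := Monic.aeval (by rw [Monic, leadingCoeff, hEdeg, hcoef])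
    (by rw [hEdeg]; exact fun h => hn'.ne' (by simpa using DFunLike.congr_fun h 1)) hmon
  have hαdeg1 : colex.degree (Polynomial.aeval E α) 1 = k * (n / M) := by
    simp [hαdeg, hEdeg, hdeg]
  apply le_antisymm
  · have hαtop := toR2pt_mem_suppSet.mpr (hαmon.coeff_degree.trans_ne one_ne_zero)
    obtain ⟨-, hkn, -, -⟩ := (suppSet_subset_union_sub F _ hαtop).elim
      (fun h => hNF ▸ suppSet_subset_newton0 F h) (fun h => (hsupp h).1)
    have hkn' : k * (n / M) ≤ M * (n / M) := by
      simp only [toR2pt] at hkn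
      rw [Nat.mul_div_cancel' hdn, ← hαdeg1]
      exact_mod_cast hkn
    exact Nat.le_of_mul_le_mul_right hkn' hn'
  · by_contra! hkM
    have hαcorner : (Polynomial.aeval E α).coeff (Finsupp.single 0 m + Finsupp.single 1 n) = 0 :=
      coeff_eq_zero_of_colex_degree_snd_lt <| by
        rw [hαdeg1]; simpa [Nat.mul_div_cancel' hdn] using Nat.mul_lt_mul_of_pos_right hkM hn'
    have hmem := (toR2pt_mem_suppSet (f := F - Polynomial.aeval E α)).mpr
      (by rw [coeff_sub, hαcorner, sub_zero]; exact coeff_corner_ne_zero hNF (by omega))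
    exact (hsupp hmem).2 (by simpa [toR2pt] using corner_mem_NsetPP (left_ne_zero_of_mul hM.ne'))

/-- in the setting of Lemma `Ecirctopdegpieces`(ii), `deg α = aδ`. -/
theorem stmt17 (a δ m n k : ℕ) (ha : 2 ≤ a) (hδ : 0 < δ) (hm : 0 < m) (hmn : m < n)
    (hdm : a * δ ∣ m) (hdn : a * δ ∣ n) (hk : 1 ≤ k) (E F : R2)
    (hNE : newton0 E = Tset ((m : ℝ) / (a * δ)) ((n : ℝ) / (a * δ)))
    (hcoef : MvPolynomial.coeff
      (Finsupp.single 0 (m / (a * δ)) + Finsupp.single 1 (n / (a * δ))) E = 1)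
    (α : Polynomial ℂ) (hmon : α.Monic) (hdeg : α.natDegree = k)
    (hNF : newton0 F = Tset (m : ℝ) (n : ℝ))
    (hsupp : suppSet (F - Polynomial.aeval E α) ⊆
      Tset (m : ℝ) (n : ℝ) \ NsetPP m n a) :
    k = a * δ :=
  stmt17_general a δ m n k hmn hdm hdn E F hNE hcoef α hmon hdeg hNF hsupp
end
end
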